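/- Let F be a field, and let T be the abelian regular subgroup of Aff(tF[[t]]) associated to the radical ring V = tF[[t]] (i.e. T = { y ↦ y∘x : x ∈ V }). Then T intersects the group of translations trivially, and T is torsion-free. -/

import Mathlib

/-- The maximal ideal `tF[[t]]` of `F[[t]]`, as an `F`-submodule. -/
noncomputable def psM (F : Type*) [Field F] : Submodule F (PowerSeries F) :=
  LinearMap.ker (PowerSeries.coeff (R := F) 0)

/-- The multiplication of `F[[t]]`, restricted to `tF[[t]]`. -/
noncomputable def psMul {F : Type*} [Field F] (x y : psM F) : psM F :=
  ⟨x.val * y.val, by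
    have hx := x.property
    have hy := y.property
    simp only [psM, LinearMap.mem_ker, PowerSeries.coeff_zero_eq_constantCoeff] at hx hy ⊢
    simp [map_mul, hx]⟩

/-!
Under `y ↦ 1 + y` the element `y ↦ y ∘ x` of `T` becomes multiplication by the unit `1 + x` of
`F[[t]]`. If it is a translation then `y x = 0` for every `y`, so `t x = 0` and `x = 0`.
If it has order dividing `n`, then `(1 + x) ^ n = 1`. Writing `n = p ^ e * m` with `p ∤ m`
(`p` the characteristic), Frobenius gives `(1 + x ^ p ^ e) ^ m = 1`; and `(1 + y) ^ m = 1`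
forces `y = 0` because `(1 + y) ^ m - 1 = y * ∑_{i<m} (1 + y) ^ i` and that sum has constant
coefficient `m ≠ 0`.
-/

namespace PowerSeries

variable {R : Type*} [CommRing R] [IsDomain R] {x : R⟦X⟧} {n : ℕ}

theorem eq_zero_of_one_add_pow_eq_one_of_natCast_ne_zero (hx : constantCoeff x = 0)
    (hn : (n : R) ≠ 0) (h : (1 + x) ^ n = 1) : x = 0 := by
  have hfactor : x * ∑ i ∈ Finset.range n, (1 + x) ^ i = 0 := by
    simpa [h] using mul_geom_sum (1 + x) n
  refine (mul_eq_zero.mp hfactor).resolve_right fun hsum => hn ?_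
  simpa [hx] using congrArg constantCoeff hsum

theorem eq_zero_of_one_add_pow_eq_one (hx : constantCoeff x = 0) (hn : n ≠ 0)
    (h : (1 + x) ^ n = 1) : x = 0 := by
  obtain ⟨p, hp⟩ := CharP.exists R
  rcases CharP.char_is_prime_or_zero R p with hprime | rfl
  · have : Fact p.Prime := ⟨hprime⟩
    have : CharP R⟦X⟧ p := charP_of_injective_ringHom C_injective p
    obtain ⟨e, m, hpm, rfl⟩ := Nat.exists_eq_pow_mul_and_not_dvd hn p hprime.ne_one
    have hfrob : (1 + x ^ p ^ e) ^ m = 1 := by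
      rw [← one_pow (p ^ e), ← add_pow_char_pow, one_pow, ← pow_mul, h]
    have hm : (m : R) ≠ 0 := mt (CharP.cast_eq_zero_iff R p m).mp hpm
    have hxpe : constantCoeff (x ^ p ^ e) = 0 := by
      rw [map_pow, hx, zero_pow (pow_ne_zero e hprime.ne_zero)]
    exact pow_eq_zero_iff (pow_ne_zero e hprime.ne_zero) |>.mp
      (eq_zero_of_one_add_pow_eq_one_of_natCast_ne_zero hxpe hm hfrob)
  · have := CharP.charP_to_charZero R
    exact eq_zero_of_one_add_pow_eq_one_of_natCast_ne_zero hx (Nat.cast_ne_zero.mpr hn) h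

end PowerSeries

open PowerSeries

section psMul

variable {F : Type*} [Field F]

@[simp]
theorem coe_psMul (x y : psM F) : (psMul x y : F⟦X⟧) = x * y := rfl

@[simp]
theorem zero_psMul (x : psM F) : psMul 0 x = 0 := Subtype.ext (zero_mul _)

@[simp]
theorem psMul_zero (x : psM F) : psMul x 0 = 0 := Subtype.ext (mul_zero _)

theorem constantCoeff_coe_psM (x : psM F) : constantCoeff (x : F⟦X⟧) = 0 := by
  simpa [psM] using x.property

theorem eq_zero_of_forall_psMul_eq_zero {x : psM F} (h : ∀ y, psMul y x = 0) : x = 0 := by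
  have hX : (X : F⟦X⟧) ∈ psM F := by simp [psM]
  have hXx : (X : F⟦X⟧) * x = 0 := congrArg Subtype.val (h ⟨X, hX⟩)
  exact Subtype.ext ((mul_eq_zero.mp hXx).resolve_left X_ne_zero)

variable {g : psM F ≃ᵃ[F] psM F} {x : psM F}

theorem eq_one_of_circ_eq_zero (hgx : ∀ y, g y = y + x + psMul y x) (hx : x = 0) : g = 1 := by
  subst hx
  exact AffineEquiv.ext fun y => by simp [hgx]

theorem one_add_pow_apply (hgx : ∀ y, g y = y + x + psMul y x) (m : ℕ) (y : psM F) :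
    1 + ((g ^ m) y : F⟦X⟧) = (1 + y) * (1 + x) ^ m := by
  induction m generalizing y with
  | zero => simp
  | succ m ih =>
    rw [pow_succ, AffineEquiv.mul_def, AffineEquiv.trans_apply, ih, hgx]
    push_cast [coe_psMul]
    ring

end psMul

theorem stmt {F : Type*} [Field F]
    (T : Subgroup (psM F ≃ᵃ[F] psM F))
    (hT : ∀ g : psM F ≃ᵃ[F] psM F,
      g ∈ T ↔ ∃ x : psM F, ∀ y : psM F, g y = y + x + psMul y x) :
    (∀ g ∈ T, (∃ c : psM F, ∀ y : psM F, g y = y + c) → g = 1) ∧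
    (∀ g ∈ T, ∀ n : ℕ, 0 < n → g ^ n = 1 → g = 1) := by
  constructor
  · rintro g hg ⟨c, hc⟩
    obtain ⟨x, hgx⟩ := (hT g).mp hg
    have hxc : x = c := by simpa [hgx, hc] using hc 0
    refine eq_one_of_circ_eq_zero hgx (eq_zero_of_forall_psMul_eq_zero fun y => ?_)
    simpa [hxc, hc] using (hgx y).symm
  · intro g hg n hn hpow
    obtain ⟨x, hgx⟩ := (hT g).mp hg
    have hunit : (1 + (x : F⟦X⟧)) ^ n = 1 := by
      simpa [hpow] using (one_add_pow_apply hgx n 0).symm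
    exact eq_one_of_circ_eq_zero hgx <| Subtype.ext <|
      eq_zero_of_one_add_pow_eq_one (constantCoeff_coe_psM x) hn.ne' hunit
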